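/- arXiv:1604.05064 — 2 statements merged into one kernel-verified Lean document; each statement's English description precedes it below -/
import Mathlib

section
/- Let ρ > 0, q = (q₁, q₂) ∈ ℝ² with d := ‖q‖ ≥ 2ρ, β the polar angle of q (so q = d(cos β, sin β)), L(θ) = √(d² − 2ρ(q₁ sin θ − q₂ cos θ)), and φ(θ) = atan2(q₂ + ρ cos θ, q₁ − ρ sin θ) − arctan(ρ / L(θ)). Then for every θ with L(θ) > 0, one has the identity d · sin(β − φ(θ)) = ρ(1 − cos(θ − φ(θ))). -/
/-- Four-quadrant arctangent: `atan2 y x` is the argument of the complex number `x + y i`. -/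
noncomputable def atan2 (y x : ℝ) : ℝ := Complex.arg ⟨x, y⟩

/-- Tangent-segment length of the RS Dubins path from the origin with heading `θ`
to the target `q = (q₁, q₂)`: `L(θ) = √(‖q‖² − 2ρ(q₁ sin θ − q₂ cos θ))`. -/
noncomputable def Lrs (ρ q₁ q₂ θ : ℝ) : ℝ :=
  Real.sqrt (Real.sqrt (q₁ ^ 2 + q₂ ^ 2) ^ 2 - 2 * ρ * (q₁ * Real.sin θ - q₂ * Real.cos θ))

/-- Heading along the straight segment of the RS Dubins path:
`φ(θ) = atan2(q₂ + ρ cos θ, q₁ − ρ sin θ) − arctan(ρ / L(θ))`. -/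
noncomputable def φrs (ρ q₁ q₂ θ : ℝ) : ℝ :=
  atan2 (q₂ + ρ * Real.cos θ) (q₁ - ρ * Real.sin θ) - Real.arctan (ρ / Lrs ρ q₁ q₂ θ)

/-- Total RS Dubins path length `D(θ) = ρ(θ − φ(θ)) + L(θ)`. -/
noncomputable def Drs (ρ q₁ q₂ θ : ℝ) : ℝ :=
  ρ * (θ - φrs ρ q₁ q₂ θ) + Lrs ρ q₁ q₂ θ

/-!
The point `q − c(θ)` has norm `√(L² + ρ²)`, the same as `(L, ρ)`, and its polar angle exceeds
that of `(L, ρ)` by exactly `φ`. Hence `q − c(θ)` is `(L, ρ)` rotated by `φ`, i.e.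
`q = c(θ) + L (cos φ, sin φ) + ρ (−sin φ, cos φ)`: the path really ends at `q`. Projecting this
onto the unit normal `(−sin φ, cos φ)` of the straight segment gives
`d sin(β − φ) = ρ − ρ cos(θ − φ)`.
-/

open Real

theorem norm_mk_eq_sqrt (x y : ℝ) : ‖(⟨x, y⟩ : ℂ)‖ = √(x ^ 2 + y ^ 2) := by
  rw [Complex.norm_def, Complex.normSq_mk, sq, sq]

theorem sqrt_mul_cos_atan2 (y x : ℝ) : √(x ^ 2 + y ^ 2) * cos (atan2 y x) = x := by
  rw [← norm_mk_eq_sqrt]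
  exact Complex.norm_mul_cos_arg _

theorem sqrt_mul_sin_atan2 (y x : ℝ) : √(x ^ 2 + y ^ 2) * sin (atan2 y x) = y := by
  rw [← norm_mk_eq_sqrt]
  exact Complex.norm_mul_sin_arg _

theorem atan2_of_pos {x : ℝ} (y : ℝ) (hx : 0 < x) : atan2 y x = arctan (y / x) := by
  have hbound := (Complex.abs_arg_lt_pi_div_two_iff (z := ⟨x, y⟩)).mpr (Or.inl hx)
  exact (arctan_eq_of_tan_eq (Complex.tan_arg _) (abs_lt.mp hbound)).symm

theorem eq_rotation_of_atan2_eq_add {x y a b φ : ℝ} (hnorm : x ^ 2 + y ^ 2 = a ^ 2 + b ^ 2)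
    (hangle : atan2 y x = atan2 b a + φ) :
    x = a * cos φ - b * sin φ ∧ y = a * sin φ + b * cos φ := by
  have hx := sqrt_mul_cos_atan2 y x
  have hy := sqrt_mul_sin_atan2 y x
  have ha := sqrt_mul_cos_atan2 b a
  have hb := sqrt_mul_sin_atan2 b a
  rw [hangle, hnorm] at hx hy
  rw [cos_add] at hx
  rw [sin_add] at hy
  constructor
  · linear_combination -hx + cos φ * ha - sin φ * hb
  · linear_combination -hy + sin φ * ha + cos φ * hb

theorem Lrs_sq {ρ q₁ q₂ θ : ℝ} (hL : 0 < Lrs ρ q₁ q₂ θ) :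
    Lrs ρ q₁ q₂ θ ^ 2 = q₁ ^ 2 + q₂ ^ 2 - 2 * ρ * (q₁ * sin θ - q₂ * cos θ) := by
  rw [Lrs, sq_sqrt (sqrt_pos.mp hL).le, sq_sqrt (by positivity)]

theorem sub_center_eq_of_Lrs_pos {ρ q₁ q₂ θ : ℝ} (hL : 0 < Lrs ρ q₁ q₂ θ) :
    q₁ - ρ * sin θ = Lrs ρ q₁ q₂ θ * cos (φrs ρ q₁ q₂ θ) - ρ * sin (φrs ρ q₁ q₂ θ) ∧
      q₂ + ρ * cos θ = Lrs ρ q₁ q₂ θ * sin (φrs ρ q₁ q₂ θ) + ρ * cos (φrs ρ q₁ q₂ θ) := by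
  refine eq_rotation_of_atan2_eq_add ?_ ?_
  · linear_combination -Lrs_sq hL + ρ ^ 2 * sin_sq_add_cos_sq θ
  · rw [atan2_of_pos ρ hL, φrs]
    ring

theorem stmt2_general (ρ q₁ q₂ β : ℝ)
    (hβ₁ : q₁ = Real.sqrt (q₁ ^ 2 + q₂ ^ 2) * Real.cos β)
    (hβ₂ : q₂ = Real.sqrt (q₁ ^ 2 + q₂ ^ 2) * Real.sin β) :
    ∀ θ : ℝ, 0 < Lrs ρ q₁ q₂ θ →
      Real.sqrt (q₁ ^ 2 + q₂ ^ 2) * Real.sin (β - φrs ρ q₁ q₂ θ)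
        = ρ * (1 - Real.cos (θ - φrs ρ q₁ q₂ θ)) := by
  intro θ hL
  obtain ⟨h₁, h₂⟩ := sub_center_eq_of_Lrs_pos hL
  rw [sin_sub, cos_sub]
  linear_combination cos (φrs ρ q₁ q₂ θ) * (h₂ - hβ₂) - sin (φrs ρ q₁ q₂ θ) * (h₁ - hβ₁)
    + ρ * sin_sq_add_cos_sq (φrs ρ q₁ q₂ θ)

theorem stmt2 (ρ q₁ q₂ β : ℝ) (hρ : 0 < ρ)
    (hd : 2 * ρ ≤ Real.sqrt (q₁ ^ 2 + q₂ ^ 2))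
    (hβ₁ : q₁ = Real.sqrt (q₁ ^ 2 + q₂ ^ 2) * Real.cos β)
    (hβ₂ : q₂ = Real.sqrt (q₁ ^ 2 + q₂ ^ 2) * Real.sin β) :
    ∀ θ : ℝ, 0 < Lrs ρ q₁ q₂ θ →
      Real.sqrt (q₁ ^ 2 + q₂ ^ 2) * Real.sin (β - φrs ρ q₁ q₂ θ)
        = ρ * (1 - Real.cos (θ - φrs ρ q₁ q₂ θ)) :=
  stmt2_general ρ q₁ q₂ β hβ₁ hβ₂
end

section
/- Let ρ > 0, q = (q₁, q₂) ∈ ℝ² with d := ‖q‖ ≥ 2ρ, β the polar angle of q, L(θ) = √(d² − 2ρ(q₁ sin θ − q₂ cos θ)), φ(θ) = atan2(q₂ + ρ cos θ, q₁ − ρ sin θ) − arctan(ρ / L(θ)), and D(θ) = ρ(θ − φ(θ)) + L(θ). Then on any open interval of headings θ on which L(θ) > 0 and θ − φ(θ) ∈ (0, 2π), the function D is twice differentiable and D″(θ) = d cos(β − φ(θ)) · (d cos(β − φ(θ)) − L(θ)) / L(θ). -/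
/-!
The turning angle `τ = θ − φ` is pinned down by `τ ∈ (0, 2π)`: it equals `π + arg (−e^{iτ})`, and
`arg` is smooth off the negative real axis, so `φ` is differentiable wherever smooth multiples of
`cos φ` and `sin φ` are, even where `atan2` jumps. The formula for `φ` says precisely that
`q − c(θ) = L e(φ) + ρ e(φ)^⊥`, i.e. the segment of length `L` leaves the circle tangentially.
Differentiating this identity gives `L′ = −ρ (L cos τ + ρ sin τ) / L` and `φ′ = −ρ sin τ / L`, hence
`D′ = ρ (1 − φ′) + L′ = ρ (1 − cos τ)` and `D″ = ρ sin τ · (1 − φ′)`. Projecting the identity on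
`e(φ)` gives `d cos (β − φ) = L + ρ sin τ`, which turns `D″` into the stated form.
-/

open Real Set Filter Topology

theorem HasDerivAt.arg_real {f : ℝ → ℂ} {f' : ℂ} {x : ℝ} (hf : HasDerivAt f f' x)
    (hx : f x ∈ Complex.slitPlane) :
    HasDerivAt (fun t => Complex.arg (f t)) (f' / f x).im x := by
  simpa [Function.comp_def, Complex.log_im] using
    Complex.imCLM.hasFDerivAt.comp_hasDerivAt x (hf.clog_real hx)

theorem hasDerivAt_of_eventually_polar {f a b : ℝ → ℝ} {a' b' x : ℝ}
    (h : ∀ᶠ t in 𝓝 x, f t ∈ Ioo 0 (2 * π) ∧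
      ∃ r > 0, a t = r * cos (f t) ∧ b t = r * sin (f t))
    (ha : HasDerivAt a a' x) (hb : HasDerivAt b b' x) :
    HasDerivAt f ((a x * b' - b x * a') / (a x ^ 2 + b x ^ 2)) x := by
  set z : ℝ → ℂ := fun t => -(a t + b t * Complex.I)
  have hpolar : ∀ᶠ t in 𝓝 x, f t ∈ Ioo 0 (2 * π) ∧
      ∃ r > (0 : ℝ), z t = r * Complex.exp ((f t - π : ℝ) * Complex.I) := by
    filter_upwards [h] with t ⟨hf, r, hr, hat, hbt⟩
    refine ⟨hf, r, hr, ?_⟩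
    rw [Complex.exp_mul_I, ← Complex.ofReal_cos, ← Complex.ofReal_sin, cos_sub_pi, sin_sub_pi]
    simp only [z, hat, hbt]
    push_cast
    ring
  have harg : ∀ᶠ t in 𝓝 x, Complex.arg (z t) = f t - π := by
    filter_upwards [hpolar] with t ⟨hf, r, hr, hzt⟩
    rw [hzt, Complex.arg_real_mul _ hr, Complex.exp_mul_I,
      Complex.arg_cos_add_sin_mul_I ⟨by linarith [hf.1], by linarith [hf.2]⟩]
  have hslit : z x ∈ Complex.slitPlane := by
    obtain ⟨hf, r, hr, hzx⟩ := hpolar.self_of_nhds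
    refine Complex.mem_slitPlane_iff_arg.mpr ⟨?_, ?_⟩
    · rw [harg.self_of_nhds]; linarith [hf.2]
    · rw [hzx]; exact mul_ne_zero (by exact_mod_cast hr.ne') (Complex.exp_ne_zero _)
  have hz : HasDerivAt z (-(a' + b' * Complex.I)) x :=
    (ha.ofReal_comp.add (hb.ofReal_comp.mul_const Complex.I)).neg
  refine (((hz.arg_real hslit).const_add π).congr_of_eventuallyEq ?_).congr_deriv ?_
  · filter_upwards [harg] with t ht
    rw [ht]; ring
  · simp only [z, neg_add_rev, Complex.div_im, Complex.add_im, Complex.neg_im, Complex.mul_im,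
      Complex.ofReal_re, Complex.I_im, mul_one, Complex.ofReal_im, Complex.I_re, mul_zero,
      add_zero, neg_zero, Complex.add_re, Complex.neg_re, Complex.mul_re, sub_self, zero_add,
      mul_neg, neg_mul, neg_neg, Complex.normSq_apply]
    ring

theorem hasDerivAt_of_eventually_polar_of_sub {f C S : ℝ → ℝ} {C' S' x : ℝ}
    (h : ∀ᶠ t in 𝓝 x, t - f t ∈ Ioo 0 (2 * π) ∧
      ∃ r > 0, C t = r * cos (f t) ∧ S t = r * sin (f t))
    (hC : HasDerivAt C C' x) (hS : HasDerivAt S S' x) :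
    HasDerivAt f ((C x * S' - S x * C') / (C x ^ 2 + S x ^ 2)) x := by
  have hrot : ∀ᶠ t in 𝓝 x, t - f t ∈ Ioo 0 (2 * π) ∧ ∃ r > 0,
      cos t * C t + sin t * S t = r * cos (t - f t) ∧
      sin t * C t - cos t * S t = r * sin (t - f t) := by
    filter_upwards [h] with t ⟨ht, r, hr, hCt, hSt⟩
    refine ⟨ht, r, hr, ?_, ?_⟩
    · rw [cos_sub, hCt, hSt]; ring
    · rw [sin_sub, hCt, hSt]; ring
  have hCS : C x ^ 2 + S x ^ 2 ≠ 0 := by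
    obtain ⟨-, r, hr, hCx, hSx⟩ := h.self_of_nhds
    have : C x ^ 2 + S x ^ 2 = r ^ 2 := by
      rw [hCx, hSx]; linear_combination r ^ 2 * sin_sq_add_cos_sq (f x)
    rw [this]; positivity
  have hg := hasDerivAt_of_eventually_polar hrot
    (((hasDerivAt_cos x).fun_mul hC).fun_add ((hasDerivAt_sin x).fun_mul hS))
    (((hasDerivAt_sin x).fun_mul hC).fun_sub ((hasDerivAt_cos x).fun_mul hS))
  have hf := (hasDerivAt_id' x).fun_sub hg
  simp only [sub_sub_cancel] at hf
  refine hf.congr_deriv ?_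
  have hab : (cos x * C x + sin x * S x) ^ 2 + (sin x * C x - cos x * S x) ^ 2
      = C x ^ 2 + S x ^ 2 := by
    linear_combination (C x ^ 2 + S x ^ 2) * sin_sq_add_cos_sq x
  rw [hab]
  field_simp
  linear_combination (C x * S' - S x * C' - C x ^ 2 - S x ^ 2) * sin_sq_add_cos_sq x

theorem rotate_atan2_sub_arctan {u v l r : ℝ} (hl : 0 < l) (h : u ^ 2 + v ^ 2 = l ^ 2 + r ^ 2) :
    u = l * cos (atan2 v u - arctan (r / l)) - r * sin (atan2 v u - arctan (r / l)) ∧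
    v = l * sin (atan2 v u - arctan (r / l)) + r * cos (atan2 v u - arctan (r / l)) := by
  set S := √(l ^ 2 + r ^ 2)
  have hS : 0 < S := by positivity
  have hS2 : S ^ 2 = l ^ 2 + r ^ 2 := sq_sqrt (by positivity)
  have hw : ‖(⟨u, v⟩ : ℂ)‖ = S := by
    rw [Complex.norm_def, Complex.normSq_mk, ← sq, ← sq, h]
  have hw0 : (⟨u, v⟩ : ℂ) ≠ 0 := norm_pos_iff.mp (hw ▸ hS)
  have h1 : 1 + (r / l) ^ 2 = (S / l) ^ 2 := by rw [div_pow, div_pow, hS2]; field_simp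
  have h2 : √(1 + (r / l) ^ 2) = S / l := by rw [h1, sqrt_sq (by positivity)]
  have hca : cos (atan2 v u) = u / S := by rw [atan2, Complex.cos_arg hw0, hw]
  have hsa : sin (atan2 v u) = v / S := by rw [atan2, Complex.sin_arg, hw]
  have hcb : cos (arctan (r / l)) = l / S := by rw [cos_arctan, h2]; field_simp
  have hsb : sin (arctan (r / l)) = r / S := by rw [sin_arctan, h2]; field_simp
  rw [cos_sub, sin_sub, hca, hsa, hcb, hsb]
  constructor
  · field_simp; linear_combination u * hS2
  · field_simp; linear_combination v * hS2

noncomputable def τrs (ρ q₁ q₂ θ : ℝ) : ℝ := θ - φrs ρ q₁ q₂ θ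

section RS

variable {ρ q₁ q₂ θ : ℝ}

theorem sq_add_sq_eq_Lrs_sq_add_sq (h : 0 < Lrs ρ q₁ q₂ θ) :
    (q₁ - ρ * sin θ) ^ 2 + (q₂ + ρ * cos θ) ^ 2 = Lrs ρ q₁ q₂ θ ^ 2 + ρ ^ 2 := by
  have hR := sqrt_pos.mp h
  rw [Lrs, sq_sqrt hR.le, sq_sqrt (by positivity)]
  linear_combination ρ ^ 2 * sin_sq_add_cos_sq θ

theorem sub_center_eq_rotate (h : 0 < Lrs ρ q₁ q₂ θ) :
    q₁ - ρ * sin θ = Lrs ρ q₁ q₂ θ * cos (φrs ρ q₁ q₂ θ) - ρ * sin (φrs ρ q₁ q₂ θ) ∧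
    q₂ + ρ * cos θ = Lrs ρ q₁ q₂ θ * sin (φrs ρ q₁ q₂ θ) + ρ * cos (φrs ρ q₁ q₂ θ) :=
  rotate_atan2_sub_arctan h (sq_add_sq_eq_Lrs_sq_add_sq h)

theorem mul_cos_add_mul_sin_eq_τrs (h : 0 < Lrs ρ q₁ q₂ θ) :
    q₁ * cos θ + q₂ * sin θ = Lrs ρ q₁ q₂ θ * cos (τrs ρ q₁ q₂ θ) + ρ * sin (τrs ρ q₁ q₂ θ) := by
  obtain ⟨hu, hv⟩ := sub_center_eq_rotate h
  rw [τrs, cos_sub, sin_sub]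
  linear_combination cos θ * hu + sin θ * hv

theorem mul_cos_φrs_add_mul_sin_φrs_eq (h : 0 < Lrs ρ q₁ q₂ θ) :
    q₁ * cos (φrs ρ q₁ q₂ θ) + q₂ * sin (φrs ρ q₁ q₂ θ)
      = Lrs ρ q₁ q₂ θ + ρ * sin (τrs ρ q₁ q₂ θ) := by
  obtain ⟨hu, hv⟩ := sub_center_eq_rotate h
  rw [τrs, sin_sub]
  linear_combination cos (φrs ρ q₁ q₂ θ) * hu + sin (φrs ρ q₁ q₂ θ) * hv
    + Lrs ρ q₁ q₂ θ * sin_sq_add_cos_sq (φrs ρ q₁ q₂ θ)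

theorem hasDerivAt_Lrs (h : 0 < Lrs ρ q₁ q₂ θ) :
    HasDerivAt (Lrs ρ q₁ q₂) (-ρ * (q₁ * cos θ + q₂ * sin θ) / Lrs ρ q₁ q₂ θ) θ := by
  have hm : HasDerivAt (fun t => q₁ * sin t - q₂ * cos t) (q₁ * cos θ + q₂ * sin θ) θ := by
    simpa using ((hasDerivAt_sin θ).const_mul q₁).fun_sub ((hasDerivAt_cos θ).const_mul q₂)
  refine (((hm.const_mul (2 * ρ)).const_sub _).sqrt (sqrt_pos.mp h).ne').congr_deriv ?_
  change _ / (2 * Lrs ρ q₁ q₂ θ) = _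
  field_simp

theorem hasDerivAt_φrs (hL : ∀ᶠ t in 𝓝 θ, 0 < Lrs ρ q₁ q₂ t)
    (hτ : ∀ᶠ t in 𝓝 θ, τrs ρ q₁ q₂ t ∈ Ioo 0 (2 * π)) :
    HasDerivAt (φrs ρ q₁ q₂) (-ρ * sin (τrs ρ q₁ q₂ θ) / Lrs ρ q₁ q₂ θ) θ := by
  -- Multiples of `cos φ` and `sin φ` that, unlike `φ`, are visibly smooth.
  set C : ℝ → ℝ := fun t => (q₁ - ρ * sin t) * Lrs ρ q₁ q₂ t + (q₂ + ρ * cos t) * ρ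
  set S : ℝ → ℝ := fun t => (q₂ + ρ * cos t) * Lrs ρ q₁ q₂ t - (q₁ - ρ * sin t) * ρ
  have hpolar : ∀ t, 0 < Lrs ρ q₁ q₂ t →
      C t = (Lrs ρ q₁ q₂ t ^ 2 + ρ ^ 2) * cos (φrs ρ q₁ q₂ t) ∧
      S t = (Lrs ρ q₁ q₂ t ^ 2 + ρ ^ 2) * sin (φrs ρ q₁ q₂ t) := by
    intro t ht
    obtain ⟨hu, hv⟩ := sub_center_eq_rotate ht
    simp only [C, S]
    rw [hu, hv]
    constructor <;> ring
  have hl : 0 < Lrs ρ q₁ q₂ θ := hL.self_of_nhds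
  have hC : HasDerivAt C _ θ :=
    ((((hasDerivAt_sin θ).const_mul ρ).const_sub q₁).fun_mul (hasDerivAt_Lrs hl)).fun_add
      ((((hasDerivAt_cos θ).const_mul ρ).const_add q₂).mul_const ρ)
  have hS : HasDerivAt S _ θ :=
    ((((hasDerivAt_cos θ).const_mul ρ).const_add q₂).fun_mul (hasDerivAt_Lrs hl)).fun_sub
      ((((hasDerivAt_sin θ).const_mul ρ).const_sub q₁).mul_const ρ)
  refine (hasDerivAt_of_eventually_polar_of_sub ?_ hC hS).congr_deriv ?_
  · filter_upwards [hL, hτ] with t hLt hτt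
    exact ⟨hτt, _, by positivity, hpolar t hLt⟩
  obtain ⟨hCθ, hSθ⟩ := hpolar θ hl
  have hP := sq_add_sq_eq_Lrs_sq_add_sq hl
  have hP0 : 0 < Lrs ρ q₁ q₂ θ ^ 2 + ρ ^ 2 := by positivity
  have hnorm : C θ ^ 2 + S θ ^ 2 = (Lrs ρ q₁ q₂ θ ^ 2 + ρ ^ 2) ^ 2 := by
    rw [hCθ, hSθ]
    linear_combination (Lrs ρ q₁ q₂ θ ^ 2 + ρ ^ 2) ^ 2 * sin_sq_add_cos_sq (φrs ρ q₁ q₂ θ)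
  have hsinτ : sin (τrs ρ q₁ q₂ θ)
      = (sin θ * C θ - cos θ * S θ) / (Lrs ρ q₁ q₂ θ ^ 2 + ρ ^ 2) := by
    rw [τrs, sin_sub, hCθ, hSθ]
    field_simp
  rw [hnorm, hsinτ]
  simp only [C, S]
  field_simp
  linear_combination -ρ ^ 2 * (q₁ * cos θ + q₂ * sin θ) * hP

theorem hasDerivAt_Drs (hL : ∀ᶠ t in 𝓝 θ, 0 < Lrs ρ q₁ q₂ t)
    (hτ : ∀ᶠ t in 𝓝 θ, τrs ρ q₁ q₂ t ∈ Ioo 0 (2 * π)) :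
    HasDerivAt (Drs ρ q₁ q₂) (ρ * (1 - cos (τrs ρ q₁ q₂ θ))) θ := by
  have hl := hL.self_of_nhds
  refine ((((hasDerivAt_id' θ).fun_sub (hasDerivAt_φrs hL hτ)).const_mul ρ).fun_add
    (hasDerivAt_Lrs hl)).congr_deriv ?_
  rw [mul_cos_add_mul_sin_eq_τrs hl]
  field_simp
  ring

theorem hasDerivAt_deriv_Drs (hL : ∀ᶠ t in 𝓝 θ, 0 < Lrs ρ q₁ q₂ t)
    (hτ : ∀ᶠ t in 𝓝 θ, τrs ρ q₁ q₂ t ∈ Ioo 0 (2 * π)) :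
    HasDerivAt (deriv (Drs ρ q₁ q₂))
      (ρ * sin (τrs ρ q₁ q₂ θ) * (1 + ρ * sin (τrs ρ q₁ q₂ θ) / Lrs ρ q₁ q₂ θ)) θ := by
  have hD : deriv (Drs ρ q₁ q₂) =ᶠ[𝓝 θ] fun t => ρ * (1 - cos (τrs ρ q₁ q₂ t)) := by
    filter_upwards [hL.eventually_nhds, hτ.eventually_nhds] with t hLt hτt
    exact (hasDerivAt_Drs hLt hτt).deriv
  have hτd := (hasDerivAt_id' θ).fun_sub (hasDerivAt_φrs hL hτ)
  refine (((hτd.cos.const_sub 1).const_mul ρ).congr_of_eventuallyEq hD).congr_deriv ?_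
  simp only [τrs]
  ring

end RS

theorem stmt4_general (ρ q₁ q₂ β a b : ℝ)
    (hβ₁ : q₁ = Real.sqrt (q₁ ^ 2 + q₂ ^ 2) * Real.cos β)
    (hβ₂ : q₂ = Real.sqrt (q₁ ^ 2 + q₂ ^ 2) * Real.sin β)
    (hL : ∀ θ ∈ Set.Ioo a b, 0 < Lrs ρ q₁ q₂ θ)
    (hτ : ∀ θ ∈ Set.Ioo a b, θ - φrs ρ q₁ q₂ θ ∈ Set.Ioo 0 (2 * Real.pi)) :
    ∀ θ ∈ Set.Ioo a b,
      DifferentiableAt ℝ (Drs ρ q₁ q₂) θ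
      ∧ DifferentiableAt ℝ (deriv (Drs ρ q₁ q₂)) θ
      ∧ deriv (deriv (Drs ρ q₁ q₂)) θ
          = Real.sqrt (q₁ ^ 2 + q₂ ^ 2) * Real.cos (β - φrs ρ q₁ q₂ θ)
            * (Real.sqrt (q₁ ^ 2 + q₂ ^ 2) * Real.cos (β - φrs ρ q₁ q₂ θ) - Lrs ρ q₁ q₂ θ)
            / Lrs ρ q₁ q₂ θ := by
  intro θ hθ
  have hnhds : Ioo a b ∈ 𝓝 θ := isOpen_Ioo.mem_nhds hθ
  have hL' : ∀ᶠ t in 𝓝 θ, 0 < Lrs ρ q₁ q₂ t := eventually_of_mem hnhds hL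
  have hτ' : ∀ᶠ t in 𝓝 θ, τrs ρ q₁ q₂ t ∈ Ioo 0 (2 * π) := eventually_of_mem hnhds hτ
  have hl := hL θ hθ
  have hK : √(q₁ ^ 2 + q₂ ^ 2) * cos (β - φrs ρ q₁ q₂ θ)
      = Lrs ρ q₁ q₂ θ + ρ * sin (τrs ρ q₁ q₂ θ) := by
    rw [cos_sub, mul_add, ← mul_assoc, ← mul_assoc, ← hβ₁, ← hβ₂, mul_cos_φrs_add_mul_sin_φrs_eq hl]
  have hD2 := hasDerivAt_deriv_Drs hL' hτ'
  refine ⟨(hasDerivAt_Drs hL' hτ').differentiableAt, hD2.differentiableAt, ?_⟩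
  rw [hD2.deriv, hK]
  field_simp
  ring

theorem stmt4 (ρ q₁ q₂ β a b : ℝ) (hρ : 0 < ρ)
    (hd : 2 * ρ ≤ Real.sqrt (q₁ ^ 2 + q₂ ^ 2))
    (hβ₁ : q₁ = Real.sqrt (q₁ ^ 2 + q₂ ^ 2) * Real.cos β)
    (hβ₂ : q₂ = Real.sqrt (q₁ ^ 2 + q₂ ^ 2) * Real.sin β)
    (hL : ∀ θ ∈ Set.Ioo a b, 0 < Lrs ρ q₁ q₂ θ)
    (hτ : ∀ θ ∈ Set.Ioo a b, θ - φrs ρ q₁ q₂ θ ∈ Set.Ioo 0 (2 * Real.pi)) :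
    ∀ θ ∈ Set.Ioo a b,
      DifferentiableAt ℝ (Drs ρ q₁ q₂) θ
      ∧ DifferentiableAt ℝ (deriv (Drs ρ q₁ q₂)) θ
      ∧ deriv (deriv (Drs ρ q₁ q₂)) θ
          = Real.sqrt (q₁ ^ 2 + q₂ ^ 2) * Real.cos (β - φrs ρ q₁ q₂ θ)
            * (Real.sqrt (q₁ ^ 2 + q₂ ^ 2) * Real.cos (β - φrs ρ q₁ q₂ θ) - Lrs ρ q₁ q₂ θ)
            / Lrs ρ q₁ q₂ θ :=
  stmt4_general ρ q₁ q₂ β a b hβ₁ hβ₂ hL hτ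
end
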